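/- Let φ be an automorphism of a finite group G with (|G|, |φ|) = 1. Then [[G, φ], φ] = [G, φ], where [G, φ] is the subgroup generated by all commutators g^{-1} g^φ for g ∈ G. -/
import Mathlib

private lemma conj_iter {N : Type} [Group N] (u : N → N) (t : N) :
    ∀ (k : ℕ) (x : N), (fun x => t⁻¹ * u (t * x))^[k] x = t⁻¹ * u^[k] (t * x) := by
  intro k
  induction k with
  | zero => intro x; simp
  | succ k ih =>
    intro x
    rw [Function.iterate_succ_apply, Function.iterate_succ_apply, ih]
    simp [mul_inv_cancel_left]

private lemma mulAut_pow_apply {N : Type} [Group N] (ψ : MulAut N) :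
    ∀ (k : ℕ) (x : N), (⇑ψ)^[k] x = (ψ ^ k) x := by
  intro k
  induction k with
  | zero => intro x; simp
  | succ k ih =>
    intro x
    rw [Function.iterate_succ_apply, ih, ← MulAut.mul_apply, ← pow_succ]

private lemma affine_iter {N : Type} [Group N] (ψ : MulAut N) (a : N) :
    ∀ k : ℕ, ∃ c : N, ∀ x : N, (fun x => a * ψ x)^[k] x = c * (ψ ^ k) x := by
  intro k
  induction k with
  | zero => exact ⟨1, fun x => by simp⟩
  | succ k ih =>
    obtain ⟨c, hc⟩ := ih
    refine ⟨c * (ψ ^ k) a, fun x => ?_⟩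
    rw [Function.iterate_succ_apply, hc]
    show c * (ψ ^ k) (a * ψ x) = c * (ψ ^ k) a * (ψ ^ (k + 1)) x
    rw [map_mul, ← MulAut.mul_apply, ← pow_succ, mul_assoc]

/-- Restriction of an automorphism to an invariant subgroup. -/
private def restrictAut {N : Type} [Group N] (ψ : MulAut N) (M : Subgroup N)
    (h1 : ∀ x ∈ M, ψ x ∈ M) (h2 : ∀ x ∈ M, ψ⁻¹ x ∈ M) : MulAut ↥M where
  toFun x := ⟨ψ x, h1 x x.2⟩
  invFun x := ⟨ψ⁻¹ x, h2 x x.2⟩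
  left_inv x := Subtype.ext (by simp [MulAut.inv_def])
  right_inv x := Subtype.ext (by simp [MulAut.inv_def])
  map_mul' x y := Subtype.ext (by simp)

private lemma restrictAut_apply {N : Type} [Group N] (ψ : MulAut N) (M : Subgroup N)
    (h1 : ∀ x ∈ M, ψ x ∈ M) (h2 : ∀ x ∈ M, ψ⁻¹ x ∈ M) (x : ↥M) :
    (restrictAut ψ M h1 h2 x : N) = ψ x := rfl

/-- Key fixed-point lemma: an "affine" map `x ↦ a * ψ x` of a finite group whose `n`-th
iterate is the identity, with `n` coprime to the order of the group, has a fixed point. -/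
private lemma affine_fixed (n : ℕ) : ∀ (N : Type) [Group N] [Finite N] (ψ : MulAut N) (a : N),
    0 < n → (fun x : N => a * ψ x)^[n] = id → Nat.Coprime (Nat.card N) n →
    ∃ x : N, a * ψ x = x := by
  induction n using Nat.strong_induction_on with
  | _ n ih =>
    intro N _ _ ψ a hn hit hcop
    rcases eq_or_ne n 1 with h1 | h1
    · subst h1
      refine ⟨1, ?_⟩
      have := congrFun hit 1
      simpa using this
    · classical
      set p := n.minFac with hp_def
      have hp : p.Prime := Nat.minFac_prime h1
      have hpn : p ∣ n := Nat.minFac_dvd n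
      set m := n / p with hm_def
      have hmp : m * p = n := Nat.div_mul_cancel hpn
      have hm_pos : 0 < m := Nat.div_pos (Nat.minFac_le hn) hp.pos
      have hm_lt : m < n := Nat.div_lt_self hn hp.one_lt
      set f : N → N := fun x => a * ψ x with hf
      obtain ⟨c, hc⟩ := affine_iter ψ a m
      letI : Fintype N := Fintype.ofFinite N
      set F : Equiv.Perm N := ψ.toEquiv.trans (Equiv.mulLeft a) with hF
      have hFcoe : ∀ (k : ℕ) (x : N), (F ^ k) x = f^[k] x := by
        intro k x
        rw [Equiv.Perm.coe_pow]
        rfl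
      have hFn : F ^ n = 1 := by
        ext x
        rw [hFcoe n x, hit]
        rfl
      have hσp : (F ^ m) ^ p = 1 := by rw [← pow_mul, hmp, hFn]
      haveI := Fact.mk hp
      have hcard : ¬ p ∣ Fintype.card N := by
        intro hd
        have hd' : p ∣ Nat.card N := by rwa [Nat.card_eq_fintype_card]
        have hg : p ∣ Nat.gcd (Nat.card N) n := Nat.dvd_gcd hd' hpn
        rw [hcop.gcd_eq_one] at hg
        exact hp.ne_one (Nat.dvd_one.mp hg)
      obtain ⟨x₀, hx₀⟩ := Equiv.Perm.exists_fixed_point_of_prime (p := p) (n := 1) hcard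
        (by rw [pow_one]; exact hσp)
      have hx₀' : f^[m] x₀ = x₀ := by rw [← hFcoe m x₀]; exact hx₀
      set M : Subgroup N :=
        { carrier := {x | (ψ ^ m) x = x}
          one_mem' := map_one _
          mul_mem' := fun {x y} hx hy => by
            simp only [Set.mem_setOf_eq, map_mul] at *
            rw [hx, hy]
          inv_mem' := fun {x} hx => by
            simp only [Set.mem_setOf_eq, map_inv] at *
            rw [hx] } with hM
      have hMmem : ∀ x : N, x ∈ M ↔ (ψ ^ m) x = x := fun _ => Iff.rfl
      have hcomm : ∀ x : N, (ψ ^ m) (ψ x) = ψ ((ψ ^ m) x) := by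
        intro x
        rw [← MulAut.mul_apply, ← MulAut.mul_apply, ← ((Commute.refl ψ).pow_right m).eq]
      have hcomm_inv : ∀ x : N, (ψ ^ m) (ψ⁻¹ x) = ψ⁻¹ ((ψ ^ m) x) := by
        intro x
        rw [← MulAut.mul_apply, ← MulAut.mul_apply,
          ← (((Commute.refl ψ).pow_right m).inv_left).eq]
      have hinv1 : ∀ x ∈ M, ψ x ∈ M := by
        intro x hx
        rw [hMmem] at hx ⊢
        rw [hcomm, hx]
      have hinv2 : ∀ x ∈ M, ψ⁻¹ x ∈ M := by
        intro x hx
        rw [hMmem] at hx ⊢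
        rw [hcomm_inv, hx]
      set ψM := restrictAut ψ M hinv1 hinv2 with hψM
      have hpsix₀ : (ψ ^ m) x₀ = c⁻¹ * x₀ := by
        have := hc x₀
        rw [hx₀'] at this
        rw [eq_inv_mul_iff_mul_eq]
        exact this.symm
      have hb_mem : x₀⁻¹ * f x₀ ∈ M := by
        rw [hMmem, map_mul, map_inv, hpsix₀]
        have h2 : (ψ ^ m) (f x₀) = c⁻¹ * f x₀ := by
          have h3 : f^[m] (f x₀) = f x₀ := by
            rw [← Function.iterate_succ_apply, Function.iterate_succ_apply', hx₀']
          have := hc (f x₀)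
          rw [h3] at this
          rw [eq_inv_mul_iff_mul_eq]
          exact this.symm
        rw [h2, mul_inv_rev, inv_inv, mul_assoc, mul_inv_cancel_left]
      set b : ↥M := ⟨x₀⁻¹ * f x₀, hb_mem⟩ with hb
      have hsemi : Function.Semiconj (Subtype.val : ↥M → N) (fun y => b * ψM y)
          (fun z => x₀⁻¹ * f (x₀ * z)) := by
        intro y
        show (x₀⁻¹ * f x₀) * ψ (y : N) = x₀⁻¹ * f (x₀ * (y : N))
        simp only [hf, map_mul, mul_assoc]
      have hiter : ∀ (k : ℕ) (y : ↥M),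
          (((fun y => b * ψM y)^[k] y : ↥M) : N) = x₀⁻¹ * f^[k] (x₀ * (y : N)) := by
        intro k y
        rw [hsemi.iterate_right k y, conj_iter]
      have hitM : (fun y : ↥M => b * ψM y)^[m] = id := by
        funext y
        apply Subtype.ext
        rw [hiter m y]
        have hy : (ψ ^ m) (y : N) = (y : N) := y.2
        have hcx : c * (ψ ^ m) x₀ = x₀ := by rw [hpsix₀, mul_inv_cancel_left]
        rw [hc, map_mul, hy, hpsix₀]
        simp only [id_eq]
        group
      have hcop' : Nat.Coprime (Nat.card ↥M) m :=
        (hcop.coprime_dvd_left (Subgroup.card_subgroup_dvd_card M)).coprime_dvd_right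
          ⟨p, hmp.symm⟩
      obtain ⟨y, hy⟩ := ih m hm_lt ↥M ψM b hm_pos hitM hcop'
      refine ⟨x₀ * (y : N), ?_⟩
      have hy' : (x₀⁻¹ * f x₀) * ψ (y : N) = (y : N) := congrArg Subtype.val hy
      have : x₀ * ((x₀⁻¹ * f x₀) * ψ (y : N)) = x₀ * (y : N) := by rw [hy']
      conv_rhs => rw [← this]
      simp only [hf, map_mul]
      group

/-- The subgroup `[G, φ] = ⟨g⁻¹ g^φ : g ∈ G⟩` for an automorphism `φ` of `G`. -/
def commAut {G : Type} [Group G] (φ : MulAut G) : Subgroup G :=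
  Subgroup.closure {x : G | ∃ g : G, x = g⁻¹ * φ g}

/-- For a coprime automorphism `φ` of a finite group `G`, `[[G,φ],φ] = [G,φ]`. -/
theorem stmt3 (G : Type) [Group G] [Finite G] (φ : MulAut G)
    (hco : Nat.Coprime (Nat.card G) (orderOf φ)) :
    Subgroup.closure {x : G | ∃ g ∈ commAut φ, x = g⁻¹ * φ g} = commAut φ := by
  classical
  have hgen : ∀ g : G, g⁻¹ * φ g ∈ commAut φ := fun g =>
    Subgroup.subset_closure ⟨g, rfl⟩
  -- φ-invariance of commAut φ
  have hmapφ : ∀ x ∈ commAut φ, φ x ∈ commAut φ := by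
    intro x hx
    have hle : (commAut φ).map φ.toMonoidHom ≤ commAut φ := by
      rw [commAut, MonoidHom.map_closure]
      apply Subgroup.closure_mono
      rintro _ ⟨_, ⟨g, rfl⟩, rfl⟩
      refine ⟨φ g, ?_⟩
      simp [map_mul, map_inv]
    exact hle ⟨x, hx, rfl⟩
  have hmapφinv : ∀ x ∈ commAut φ, φ⁻¹ x ∈ commAut φ := by
    intro x hx
    have hle : (commAut φ).map (φ⁻¹ : MulAut G).toMonoidHom ≤ commAut φ := by
      rw [commAut, MonoidHom.map_closure]
      apply Subgroup.closure_mono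
      rintro _ ⟨_, ⟨g, rfl⟩, rfl⟩
      refine ⟨φ⁻¹ g, ?_⟩
      simp only [MulEquiv.coe_toMonoidHom, map_mul, map_inv]
      congr 1
      show (φ⁻¹ : MulAut G) (φ g) = φ ((φ⁻¹ : MulAut G) g)
      rw [← MulAut.mul_apply, ← MulAut.mul_apply, inv_mul_cancel, mul_inv_cancel]
    exact hle ⟨x, hx, rfl⟩
  haveI : Finite (MulAut G) :=
    Finite.of_injective (MulEquiv.toEquiv) (fun _ _ h => MulEquiv.toEquiv_injective h)
  have hnpos : 0 < orderOf φ := orderOf_pos φ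
  set ψH := restrictAut φ (commAut φ) hmapφ hmapφinv with hψH
  have main : ∀ g : G, ∃ h : G, h ∈ commAut φ ∧ g⁻¹ * φ g = h⁻¹ * φ h := by
    intro g
    set n := orderOf φ with hn
    set aH : ↥(commAut φ) := ⟨g⁻¹ * φ g, hgen g⟩ with haH
    have hit : (fun y : ↥(commAut φ) => aH * ψH y)^[n] = id := by
      funext y
      apply Subtype.ext
      have hsc : Function.Semiconj (Subtype.val : ↥(commAut φ) → G)
          (fun y => aH * ψH y) (fun z => g⁻¹ * φ (g * z)) := by
        intro z
        show (g⁻¹ * φ g) * φ (z : G) = g⁻¹ * φ (g * (z : G))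
        rw [map_mul, mul_assoc]
      rw [hsc.iterate_right n y, conj_iter, mulAut_pow_apply, pow_orderOf_eq_one]
      show g⁻¹ * (g * (y : G)) = (y : G)
      rw [inv_mul_cancel_left]
    have hcop' : Nat.Coprime (Nat.card ↥(commAut φ)) n :=
      hco.coprime_dvd_left (Subgroup.card_subgroup_dvd_card (commAut φ))
    obtain ⟨y, hy⟩ := affine_fixed n ↥(commAut φ) ψH aH hnpos hit hcop'
    have hy' : (g⁻¹ * φ g) * φ (y : G) = (y : G) := congrArg Subtype.val hy
    refine ⟨(y : G)⁻¹, Subgroup.inv_mem _ y.2, ?_⟩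
    rw [map_inv, inv_inv, eq_mul_inv_iff_mul_eq]
    exact hy'
  apply le_antisymm
  · rw [Subgroup.closure_le]
    rintro x ⟨h, hh, rfl⟩
    exact Subgroup.mul_mem _ (Subgroup.inv_mem _ hh) (hmapφ h hh)
  · show Subgroup.closure {x : G | ∃ g : G, x = g⁻¹ * φ g} ≤ _
    rw [Subgroup.closure_le]
    rintro x ⟨g, rfl⟩
    obtain ⟨h, hh, heq⟩ := main g
    rw [heq]
    exact Subgroup.subset_closure ⟨h, hh, rfl⟩
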